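/- Let G^{A,B} be a biconed graph and T a spanning tree of G^{A,B} that does not contain the edge 00̄. If some component of T ∖ T_0 contains two connecting vertices a ∈ A and b ∈ Ā, then both connecting edges 0a and 0̄b are internally passive in T; indeed each can be exchanged with the smaller edge 00̄ to yield another spanning tree. -/

import Mathlib

/-!
Formalization scaffold for "h-vectors of graphic matroids of biconed graphs".

A graph `G` (loops and parallel edges allowed) with vertex set `A ∪ B` is
modelled by an abstract finite edge type `E` with an endpoint map
`ends : E → Sym2 (Fin m ⊕ₗ Fin n)`, where `A = Fin m = {1,…,m}`,
`Ā = B \ A = Fin n = {1̄,…,n̄}` and the finset `S ⊆ Fin m` records `A ∩ B`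
(so `B = S ∪ Ā`).  The biconing `G^{A,B}` adds the two vertices `0` and `0̄`
and the edges `00̄`, `0a (a ∈ A)` and `0̄b (b ∈ B)`.
-/

namespace BiconedPaper

noncomputable section
open scoped Classical

/-! ### Walks in multigraphs presented by an endpoint map -/

/-- A walk in the multigraph with edge set `ε` and endpoint map `ends`. -/
inductive MWalk {ε ν : Type} (ends : ε → Sym2 ν) : ν → ν → Type
  | nil (u : ν) : MWalk ends u u
  | cons {u w : ν} (e : ε) (v : ν) (h : ends e = s(u, v)) (p : MWalk ends v w) :
      MWalk ends u w

namespace MWalk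

variable {ε ν : Type} {ends : ε → Sym2 ν}

/-- The list of edges traversed by a walk. -/
def edges : ∀ {u v : ν}, MWalk ends u v → List ε
  | _, _, nil _ => []
  | _, _, cons e _ _ p => e :: p.edges

/-- The list of vertices visited by a walk. -/
def support : ∀ {u v : ν}, MWalk ends u v → List ν
  | u, _, nil _ => [u]
  | u, _, cons _ _ _ p => u :: p.support

/-- A walk is a path if it visits no vertex twice. -/
def IsPath {u v : ν} (p : MWalk ends u v) : Prop := p.support.Nodup

/-- All edges of the walk belong to the edge set `F`. -/
def edgesIn {u v : ν} (p : MWalk ends u v) (F : Finset ε) : Prop :=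
  ∀ e ∈ p.edges, e ∈ F

/-- The number of "bridging" edges traversed by a walk, i.e. steps whose two
endpoints lie on different sides according to `sideF`. -/
def bridgeCount (sideF : ν → Bool) : ∀ {u v : ν}, MWalk ends u v → ℕ
  | _, _, nil _ => 0
  | u, _, cons _ v' _ p => (if sideF u = sideF v' then 0 else 1) + p.bridgeCount sideF

end MWalk

/-- `u` and `v` are joined by a walk all of whose edges lie in `F`. -/
def Reachable {ε ν : Type} (ends : ε → Sym2 ν) (F : Finset ε) (u v : ν) : Prop :=
  ∃ p : MWalk ends u v, p.edgesIn F

/-- An edge set is acyclic (a forest) iff removing any one of its edges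
disconnects the endpoints of that edge.  (In particular no loops and no
parallel pairs.) -/
def IsAcyclic {ε ν : Type} [DecidableEq ε] (ends : ε → Sym2 ν) (F : Finset ε) : Prop :=
  ∀ e ∈ F, ∀ u v : ν, ends e = s(u, v) → ¬ Reachable ends (F.erase e) u v

/-- A spanning tree: an acyclic edge set connecting every pair of vertices. -/
def IsSpanningTree {ε ν : Type} [DecidableEq ε] (ends : ε → Sym2 ν) (T : Finset ε) : Prop :=
  IsAcyclic ends T ∧ ∀ u v : ν, Reachable ends T u v

/-! ### Biconed graphs -/

/-- The data of a biconed graph `G^{A,B}`:  the graph `G` has vertex set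
`A ∪ B` with `A = Fin m`, `Ā = B \ A = Fin n`, `A ∩ B = S`, and abstract
edge set `E` (so loops and parallel edges are allowed). -/
structure BiconedGraph where
  m : ℕ
  n : ℕ
  E : Type
  fintypeE : Fintype E
  decEqE : DecidableEq E
  ends : E → Sym2 (Fin m ⊕ₗ Fin n)
  S : Finset (Fin m)

namespace BiconedGraph

variable (P : BiconedGraph)

instance : Fintype P.E := P.fintypeE
instance : DecidableEq P.E := P.decEqE

/-- The vertices of `G`, linearly ordered `1 < ⋯ < m < 1̄ < ⋯ < n̄`. -/
abbrev VG := Fin P.m ⊕ₗ Fin P.n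

/-- The vertices of `G^{A,B}_red`:  `⊥` is the vertex `0̄`, ordered
`0̄ < 1 < ⋯ < m < 1̄ < ⋯ < n̄`. -/
abbrev Vred := WithBot P.VG

/-- The vertices of `G^{A,B}`: `⊥` is `0`, ordered `0 < 0̄ < 1 < ⋯ < n̄`. -/
abbrev W := WithBot P.Vred

/-- The vertex `a ∈ A`. -/
def aVert (a : Fin P.m) : P.VG := toLex (Sum.inl a)
/-- The vertex `b ∈ Ā`. -/
def bVert (b : Fin P.n) : P.VG := toLex (Sum.inr b)
/-- Inclusion of the vertices of `G` into those of `G^{A,B}_red`. -/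
def liftV (x : P.VG) : P.Vred := (x : WithBot P.VG)
/-- Inclusion of the vertices of `G^{A,B}_red` into those of `G^{A,B}`. -/
def liftW (x : P.Vred) : P.W := (x : WithBot P.Vred)

/-- The edges of the biconed graph `G^{A,B}`:  the edge `00̄`, the coning
edges `0a (a ∈ A)`, `0̄b (b ∈ Ā)`, `0̄a (a ∈ A ∩ B)`, and the edges of `G`. -/
abbrev EB := Unit ⊕ (Fin P.m ⊕ (Fin P.n ⊕ ({a : Fin P.m // a ∈ P.S} ⊕ P.E)))

/-- The edge `00̄`. -/
abbrev e00 : P.EB := Sum.inl ()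
/-- The coning edge `0a`, `a ∈ A`. -/
abbrev eA (a : Fin P.m) : P.EB := Sum.inr (Sum.inl a)
/-- The coning edge `0̄b`, `b ∈ Ā`. -/
abbrev eB (b : Fin P.n) : P.EB := Sum.inr (Sum.inr (Sum.inl b))
/-- The coning edge `0̄a`, `a ∈ A ∩ B`. -/
abbrev eS (a : {a : Fin P.m // a ∈ P.S}) : P.EB := Sum.inr (Sum.inr (Sum.inr (Sum.inl a)))
/-- An original edge of `G`. -/
abbrev eG (e : P.E) : P.EB := Sum.inr (Sum.inr (Sum.inr (Sum.inr e)))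

/-- The endpoint map of `G^{A,B}`. -/
def endsB : P.EB → Sym2 P.W
  | Sum.inl _ => s((⊥ : P.W), P.liftW ⊥)
  | Sum.inr (Sum.inl a) => s((⊥ : P.W), P.liftW (P.liftV (P.aVert a)))
  | Sum.inr (Sum.inr (Sum.inl b)) => s(P.liftW ⊥, P.liftW (P.liftV (P.bVert b)))
  | Sum.inr (Sum.inr (Sum.inr (Sum.inl a))) => s(P.liftW ⊥, P.liftW (P.liftV (P.aVert a.1)))
  | Sum.inr (Sum.inr (Sum.inr (Sum.inr e))) => (P.ends e).map fun x => P.liftW (P.liftV x)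

/-- The spanning tree `T₀`, consisting of `00̄`, the edges `0a (a ∈ A)` and
the edges `0̄b (b ∈ Ā)`. -/
def T0 : Finset P.EB :=
  Finset.univ.filter fun e => match e with
    | Sum.inl _ => True
    | Sum.inr (Sum.inl _) => True
    | Sum.inr (Sum.inr (Sum.inl _)) => True
    | _ => False

/-- The edges of `G^{A,B}_red` (delete the edges of `T₀` and the vertex `0`):
the edges `0̄a (a ∈ A ∩ B)` together with the edges of `G`. -/
abbrev Ered := {a : Fin P.m // a ∈ P.S} ⊕ P.E

/-- The endpoint map of `G^{A,B}_red`; `⊥` is the vertex `0̄`. -/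
def endsRed : P.Ered → Sym2 P.Vred
  | Sum.inl a => s((⊥ : P.Vred), P.liftV (P.aVert a.1))
  | Sum.inr e => (P.ends e).map P.liftV

/-- Inclusion of the edges of `G^{A,B}_red` into those of `G^{A,B}`. -/
def redToEB : P.Ered → P.EB
  | Sum.inl a => P.eS a
  | Sum.inr e => P.eG e

/-- The edge set `T \ T₀` of `T`, viewed inside `G^{A,B}_red`. -/
def redOf (T : Finset P.EB) : Finset P.Ered :=
  Finset.univ.filter fun e => P.redToEB e ∈ T

/-- `true` on the vertices of `A`, `false` on the vertices of `Ā ∪ {0̄}`. -/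
def side : P.Vred → Bool :=
  WithBot.recBotCoe false fun x => Sum.elim (fun _ => true) (fun _ => false) (ofLex x)

/-- The vertex lies in `A`. -/
def InA (v : P.Vred) : Prop := ∃ a : Fin P.m, v = P.liftV (P.aVert a)

/-- An edge of `G^{A,B}_red` is bridging if it joins a vertex of `A` to a
vertex of `Ā ∪ {0̄}`. -/
def BridgingE (e : P.Ered) : Prop :=
  ∃ u v : P.Vred, P.endsRed e = s(u, v) ∧ P.side u ≠ P.side v

/-! ### 2-edge-rooted forests -/

/-- The underlying edge set `F` of the multiset of edges given by the
multiplicity function `mult` (an edge `e` carries `mult e - 1` edge roots). -/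
def mSupport (mult : P.Ered → ℕ) : Finset P.Ered :=
  Finset.univ.filter fun e => mult e ≠ 0

/-- The degree of the multiset of edges given by `mult`. -/
def deg (mult : P.Ered → ℕ) : ℕ := ∑ e : P.Ered, mult e

/-- Edge `e` meets the connected component of `v` in the edge set `F`. -/
def Touches (F : Finset P.Ered) (v : P.Vred) (e : P.Ered) : Prop :=
  ∃ u : P.Vred, u ∈ P.endsRed e ∧ Reachable P.endsRed F v u

/-- The total number of edge roots in the component of `v`. -/
def compEdgeRoots (mult : P.Ered → ℕ) (v : P.Vred) : ℕ :=
  ∑ e ∈ P.mSupport mult, if P.Touches (P.mSupport mult) v e then mult e - 1 else 0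

/-- The component of `v` is `compCount`-edge-rooted:  the number of its edge
roots, plus `1` if it contains the vertex `0̄`. -/
def compCount (mult : P.Ered → ℕ) (v : P.Vred) : ℕ :=
  P.compEdgeRoots mult v +
    if Reachable P.endsRed (P.mSupport mult) v (⊥ : P.Vred) then 1 else 0

/-- Condition (C3) for the `2`-edge-rooted component of `v`:  the unique
shortest path containing both edge roots (resp. the vertex `0̄` and the edge
root, if the component contains `0̄`) has an odd number of bridging edges.
The shortest path containing two edges is the unique path whose first and
last edges are the two rooted edges; if the two edge roots lie on one common
edge (`mult e = 3`) the path is that single edge. -/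
def C3At (mult : P.Ered → ℕ) (v : P.Vred) : Prop :=
  (Reachable P.endsRed (P.mSupport mult) v (⊥ : P.Vred) →
    ∃ (x : P.Vred) (p : MWalk P.endsRed (⊥ : P.Vred) x),
      p.IsPath ∧ p.edgesIn (P.mSupport mult) ∧
      (∃ e, p.edges.getLast? = some e ∧ 2 ≤ mult e) ∧
      Odd (p.bridgeCount P.side)) ∧
  (¬ Reachable P.endsRed (P.mSupport mult) v (⊥ : P.Vred) →
    ∃ (x y : P.Vred) (p : MWalk P.endsRed x y),
      p.IsPath ∧ p.edgesIn (P.mSupport mult) ∧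
      Reachable P.endsRed (P.mSupport mult) v x ∧
      (∃ e, p.edges.head? = some e ∧ 2 ≤ mult e) ∧
      (∃ e, p.edges.getLast? = some e ∧ 2 ≤ mult e) ∧
      (∀ e, p.edges = [e] → mult e = 3) ∧
      Odd (p.bridgeCount P.side))

/-- `mult : Ered → ℕ` is (the multiplicity function of) a 2-edge-rooted
forest of `G^{A,B}_red`:
(C0) its support is a spanning forest;
(C1) at most one component is `2`-edge-rooted;
(C2) every other component is `0`- or `1`-edge-rooted;
(C3) the parity condition on the path joining the two roots. -/
def Is2ERF (mult : P.Ered → ℕ) : Prop :=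
  IsAcyclic P.endsRed (P.mSupport mult) ∧
  (∀ v : P.Vred, P.compCount mult v ≤ 2) ∧
  (∀ u v : P.Vred, P.compCount mult u = 2 → P.compCount mult v = 2 →
    Reachable P.endsRed (P.mSupport mult) u v) ∧
  (∀ v : P.Vred, P.compCount mult v = 2 → P.C3At mult v)

/-! ### Birooted forests -/

/-- `(F, R)` is a birooted forest of `G^{A,B}_red`:  `F` is a spanning forest,
the root set `R` contains `0̄`, every component of `F` contains at least one
root, no component contains three roots, at most one component contains two
roots, and a component with two roots has one root in `A` and the other in
`Ā ∪ {0̄}`. -/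
def IsBirootedForest (F : Finset P.Ered) (R : Set P.Vred) : Prop :=
  IsAcyclic P.endsRed F ∧
  (⊥ : P.Vred) ∈ R ∧
  (∀ v : P.Vred, ∃ r ∈ R, Reachable P.endsRed F v r) ∧
  (∀ r₁ ∈ R, ∀ r₂ ∈ R, ∀ r₃ ∈ R, r₁ ≠ r₂ → r₁ ≠ r₃ → r₂ ≠ r₃ →
    Reachable P.endsRed F r₁ r₂ → Reachable P.endsRed F r₁ r₃ → False) ∧
  (∀ r₁ ∈ R, ∀ r₂ ∈ R, ∀ r₃ ∈ R, ∀ r₄ ∈ R, r₁ ≠ r₂ → r₃ ≠ r₄ →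
    Reachable P.endsRed F r₁ r₂ → Reachable P.endsRed F r₃ r₄ →
    Reachable P.endsRed F r₁ r₃) ∧
  (∀ r₁ ∈ R, ∀ r₂ ∈ R, r₁ ≠ r₂ → Reachable P.endsRed F r₁ r₂ →
    (P.InA r₁ ∧ ¬ P.InA r₂) ∨ (P.InA r₂ ∧ ¬ P.InA r₁))

/-! ### Internal activity and the edge order -/

/-- `e` is internally passive in the spanning tree `T`:  it can be exchanged
for a strictly smaller edge `f` so that the result is again a spanning tree. -/
def InternallyPassive (ord : LinearOrder P.EB) (T : Finset P.EB) (e : P.EB) : Prop :=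
  e ∈ T ∧ ∃ f : P.EB, ord.lt f e ∧ IsSpanningTree P.endsB (insert f (T.erase e))

/-- `e` is internally active in the spanning tree `T`. -/
def InternallyActive (ord : LinearOrder P.EB) (T : Finset P.EB) (e : P.EB) : Prop :=
  e ∈ T ∧ ¬ ∃ f : P.EB, ord.lt f e ∧ IsSpanningTree P.endsB (insert f (T.erase e))

/-- The number of internally passive edges of `T`. -/
def ipCount (ord : LinearOrder P.EB) (T : Finset P.EB) : ℕ :=
  (T.filter fun e => P.InternallyPassive ord T e).card

/-- The smaller endpoint of an edge of `G^{A,B}`. -/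
def endMin (e : P.EB) : P.W := Sym2.lift ⟨fun a b => a ⊓ b, fun a b => inf_comm a b⟩ (P.endsB e)
/-- The larger endpoint of an edge of `G^{A,B}`. -/
def endMax (e : P.EB) : P.W := Sym2.lift ⟨fun a b => a ⊔ b, fun a b => sup_comm a b⟩ (P.endsB e)

/-- The endpoints of an edge, as an ordered pair in the lexicographic square
of the vertex order `0 < 0̄ < 1 < ⋯ < m < 1̄ < ⋯ < n̄`. -/
def lexEnds (e : P.EB) : P.W ×ₗ P.W := toLex (P.endMin e, P.endMax e)

/-- A linear order on the edges of `G^{A,B}` is admissible if it refines the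
lexicographic order on endpoints (so parallel edges are ordered arbitrarily). -/
def AdmissibleOrder (ord : LinearOrder P.EB) : Prop :=
  ∀ e f : P.EB, P.lexEnds e < P.lexEnds f → ord.lt e f

/-- `v` is a connecting vertex of `T`:  `v ∈ A` and `v` is adjacent to `0` in
`T`, or `v ∈ Ā` and `v` is adjacent to `0̄` in `T`. -/
def ConnVertex (T : Finset P.EB) (v : P.Vred) : Prop :=
  (∃ a : Fin P.m, v = P.liftV (P.aVert a) ∧ P.eA a ∈ T) ∨
  (∃ b : Fin P.n, v = P.liftV (P.bVert b) ∧ P.eB b ∈ T)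

/-- `e` is a connecting edge of `T` (an edge `0a`, `a ∈ A`, or `0̄b`, `b ∈ Ā`)
with connecting vertex `v`. -/
def ConnEdge (T : Finset P.EB) (e : P.EB) (v : P.Vred) : Prop :=
  e ∈ T ∧ ((∃ a : Fin P.m, e = P.eA a ∧ v = P.liftV (P.aVert a)) ∨
           (∃ b : Fin P.n, e = P.eB b ∧ v = P.liftV (P.bVert b)))

/-! ### The h-vector -/

/-- `f_{i-1}`:  the number of acyclic edge sets of cardinality `i` in `G^{A,B}`. -/
def numAcyclic (i : ℕ) : ℕ :=
  Nat.card {F : Finset P.EB // IsAcyclic P.endsB F ∧ F.card = i}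

/-- The rank of the graphic matroid of `G^{A,B}`:  `|V| - 1 = m + n + 1`. -/
def d : ℕ := P.m + P.n + 1

/-- `h` is the h-vector of the graphic matroid of `G^{A,B}`:  it satisfies
`Σ_{i=0}^{d} f_{i-1} (t-1)^{d-i} = Σ_{k=0}^{d} h_k t^{d-k}`. -/
def IsHVector (h : ℕ → ℤ) : Prop :=
  ∑ i ∈ Finset.range (P.d + 1),
      Polynomial.C ((P.numAcyclic i : ℤ)) * (Polynomial.X - 1) ^ (P.d - i)
    = ∑ k ∈ Finset.range (P.d + 1), Polynomial.C (h k) * Polynomial.X ^ (P.d - k)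

end BiconedGraph

/-- `(h 0, …, h d)` is a pure O-sequence:  there is a multicomplex `M` of
multisets on a finite ground set (nonempty, closed under sub-multisets), all
of whose inclusion-maximal members have the same cardinality, whose members
all have cardinality at most `d`, and which has exactly `h i` members of
cardinality `i` for every `i ≤ d`. -/
def IsPureOSeq (d : ℕ) (h : ℕ → ℤ) : Prop :=
  ∃ (N : ℕ) (M : Set (Multiset (Fin N))),
    M.Nonempty ∧
    (∀ s ∈ M, ∀ t : Multiset (Fin N), t ≤ s → t ∈ M) ∧
    (∀ s ∈ M, ∀ t ∈ M, (∀ u ∈ M, s ≤ u → u = s) → (∀ u ∈ M, t ≤ u → u = t) →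
      Multiset.card s = Multiset.card t) ∧
    (∀ s ∈ M, Multiset.card s ≤ d) ∧
    (∀ i ≤ d, (Nat.card {s : Multiset (Fin N) // s ∈ M ∧ Multiset.card s = i} : ℤ) = h i)


/-! In `T - 0a` the vertex `a` is still joined to `0̄`, through the path from `a` to `b` in
`T ∖ T₀` followed by `0̄b`; so `00̄` reconnects the two components of `T - 0a`, and the
exchange `T - 0a + 00̄` is again a spanning tree.  Symmetrically, in `T - 0̄b` the vertex `b`
is joined to `0` through `a` and `0a`.  Since `00̄` is the lexicographically first edge, both
`0a` and `0̄b` are internally passive. -/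

section Multigraph

open Relation

variable {ε ν : Type} {ends : ε → Sym2 ν} {F F' : Finset ε} {e f : ε} {u v w x y : ν}

def Adj (ends : ε → Sym2 ν) (F : Finset ε) (u v : ν) : Prop :=
  ∃ e ∈ F, ends e = s(u, v)

theorem Adj.symm : Adj ends F u v → Adj ends F v u
  | ⟨e, he, h⟩ => ⟨e, he, h.trans Sym2.eq_swap⟩

theorem reachable_iff_reflTransGen :
    Reachable ends F u v ↔ ReflTransGen (Adj ends F) u v := by
  constructor
  · rintro ⟨p, hp⟩
    induction p with
    | nil => exact .refl
    | cons e _ h p ih =>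
      exact .head ⟨e, hp e List.mem_cons_self, h⟩ (ih fun e he => hp e (List.mem_cons_of_mem _ he))
  · intro h
    induction h using ReflTransGen.head_induction_on with
    | refl => exact ⟨.nil v, fun e he => by simp [MWalk.edges] at he⟩
    | head hadj _ ih =>
      obtain ⟨e, he, hends⟩ := hadj
      obtain ⟨p, hp⟩ := ih
      exact ⟨.cons e _ hends p, List.forall_mem_cons.2 ⟨he, hp⟩⟩

namespace Reachable

theorem refl (u : ν) : Reachable ends F u u :=
  reachable_iff_reflTransGen.2 .refl

theorem trans (h₁ : Reachable ends F u v) (h₂ : Reachable ends F v w) :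
    Reachable ends F u w :=
  reachable_iff_reflTransGen.2 <|
    (reachable_iff_reflTransGen.1 h₁).trans (reachable_iff_reflTransGen.1 h₂)

theorem symm (h : Reachable ends F u v) : Reachable ends F v u :=
  reachable_iff_reflTransGen.2 <| ReflTransGen.mono (fun _ _ => Adj.symm) _ _ <|
    ReflTransGen.swap _ _ (reachable_iff_reflTransGen.1 h)

theorem of_mem (he : e ∈ F) (h : ends e = s(u, v)) : Reachable ends F u v :=
  reachable_iff_reflTransGen.2 <| .single ⟨e, he, h⟩

theorem of_sym2_eq (h : s(u, v) = s(x, y)) (huv : Reachable ends F u v) :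
    Reachable ends F x y := by
  rcases Sym2.eq_iff.1 h with ⟨rfl, rfl⟩ | ⟨rfl, rfl⟩
  exacts [huv, huv.symm]

theorem mono (hF : F ⊆ F') (h : Reachable ends F u v) : Reachable ends F' u v :=
  reachable_iff_reflTransGen.2 <|
    ReflTransGen.mono (fun _ _ ⟨e, he, h⟩ => ⟨e, hF he, h⟩) _ _
      (reachable_iff_reflTransGen.1 h)

theorem map {ε' ν' : Type} {ends' : ε' → Sym2 ν'} {F' : Finset ε'} (g : ν → ν')
    (hg : ∀ e ∈ F, ∀ p q, ends e = s(p, q) → Reachable ends' F' (g p) (g q))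
    (h : Reachable ends F u v) : Reachable ends' F' (g u) (g v) :=
  reachable_iff_reflTransGen.2 <|
    (reachable_iff_reflTransGen.1 h).lift' g fun _ _ ⟨e, he, h⟩ =>
      reachable_iff_reflTransGen.1 (hg e he _ _ h)

theorem of_insert [DecidableEq ε] (hf : ends f = s(x, y))
    (h : Reachable ends (insert f F) u v) :
    Reachable ends F u v ∨
      ((Reachable ends F u x ∨ Reachable ends F u y) ∧
        (Reachable ends F v x ∨ Reachable ends F v y)) := by
  let Near (z : ν) : Prop := Reachable ends F z x ∨ Reachable ends F z y
  have near_of_reachable {p q : ν} (hpq : Reachable ends F p q) (hq : Near q) : Near p :=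
    hq.imp hpq.trans hpq.trans
  have hequiv : Equivalence fun p q => Reachable ends F p q ∨ (Near p ∧ Near q) := by
    refine ⟨fun p => .inl (refl p), fun h => h.imp symm And.symm, ?_⟩
    rintro p q r (hpq | ⟨hp, hq⟩) (hqr | ⟨hq', hr⟩)
    · exact .inl (hpq.trans hqr)
    · exact .inr ⟨near_of_reachable hpq hq', hr⟩
    · exact .inr ⟨hp, near_of_reachable hqr.symm hq⟩
    · exact .inr ⟨hp, hr⟩
  refine reflTransGen_le_of_equivalence_of_le hequiv ?_ u v (reachable_iff_reflTransGen.1 h)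
  rintro p q ⟨g, hg, hpq⟩
  rcases Finset.mem_insert.1 hg with rfl | hgF
  · rcases Sym2.eq_iff.1 (hpq.symm.trans hf) with ⟨rfl, rfl⟩ | ⟨rfl, rfl⟩
    exacts [.inr ⟨.inl (refl _), .inr (refl _)⟩, .inr ⟨.inr (refl _), .inl (refl _)⟩]
  · exact .inl (of_mem hgF hpq)

end Reachable

variable [DecidableEq ε]

theorem IsAcyclic.mono (hF : IsAcyclic ends F) (h : F' ⊆ F) : IsAcyclic ends F' :=
  fun e he p q hpq hreach =>
    hF e (h he) p q hpq (hreach.mono (Finset.erase_subset_erase e h))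

theorem IsAcyclic.insert (hF : IsAcyclic ends F) (hf : ends f = s(x, y))
    (hxy : ¬ Reachable ends F x y) : IsAcyclic ends (insert f F) := by
  intro g hg p q hpq hreach
  by_cases hgf : g = f
  · subst hgf
    rw [Finset.erase_insert_eq_erase] at hreach
    exact hxy ((hreach.mono (Finset.erase_subset g F)).of_sym2_eq (hpq.symm.trans hf))
  have hgF : g ∈ F := (Finset.mem_insert.1 hg).resolve_left hgf
  have hpq' : ¬ Reachable ends (F.erase g) p q := hF g hgF p q hpq
  rw [Finset.erase_insert_of_ne (Ne.symm hgf)] at hreach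
  have hsub : F.erase g ⊆ F := Finset.erase_subset g F
  have hjoin {r t : ν} (hpr : Reachable ends (F.erase g) p r)
      (hqt : Reachable ends (F.erase g) q t) : Reachable ends F r t :=
    ((hpr.mono hsub).symm.trans (.of_mem hgF hpq)).trans (hqt.mono hsub)
  rcases hreach.of_insert hf with h | ⟨hpx | hpy, hqx | hqy⟩
  · exact hpq' h
  · exact hpq' (hpx.trans hqx.symm)
  · exact hxy (hjoin hpx hqy)
  · exact hxy (hjoin hpy hqx).symm
  · exact hpq' (hpy.trans hqy.symm)

theorem IsSpanningTree.exchange {T : Finset ε} (hT : IsSpanningTree ends T) (he : e ∈ T)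
    (heuv : ends e = s(u, v)) (hf : ends f = s(x, y))
    (hux : Reachable ends (T.erase e) u x) (hvy : Reachable ends (T.erase e) v y) :
    IsSpanningTree ends (insert f (T.erase e)) := by
  have hxy : ¬ Reachable ends (T.erase e) x y := fun hxy =>
    hT.1 e he u v heuv ((hux.trans hxy).trans hvy.symm)
  have hsub : T.erase e ⊆ insert f (T.erase e) := Finset.subset_insert f _
  have huv : Reachable ends (insert f (T.erase e)) u v :=
    ((hux.mono hsub).trans (.of_mem (Finset.mem_insert_self f _) hf)).trans (hvy.mono hsub).symm
  refine ⟨(hT.1.mono (Finset.erase_subset e T)).insert hf hxy, fun p q => (hT.2 p q).map id ?_⟩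
  intro g hg p q hpq
  by_cases hge : g = e
  · subst hge
    exact huv.of_sym2_eq (heuv.symm.trans hpq)
  · exact .of_mem (hsub (Finset.mem_erase.2 ⟨hge, hg⟩)) hpq

end Multigraph

namespace BiconedGraph

variable {P : BiconedGraph}

theorem endsB_redToEB (e : P.Ered) : P.endsB (P.redToEB e) = (P.endsRed e).map P.liftW := by
  rcases e with _ | _ <;> simp [redToEB, endsB, endsRed, Sym2.map_map]

theorem redToEB_notMem_T0 (e : P.Ered) : P.redToEB e ∉ P.T0 := by
  rcases e with _ | _ <;> simp [redToEB, T0]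

theorem eA_mem_T0 (a : Fin P.m) : P.eA a ∈ P.T0 := by simp [T0]

theorem eB_mem_T0 (b : Fin P.n) : P.eB b ∈ P.T0 := by simp [T0]

theorem reachable_erase_of_reachable_redOf {T : Finset P.EB} {c : P.EB} (hc : c ∈ P.T0)
    {u v : P.Vred} (h : Reachable P.endsRed (P.redOf T) u v) :
    Reachable P.endsB (T.erase c) (P.liftW u) (P.liftW v) := by
  refine h.map P.liftW fun e he p q hpq => .of_mem ?_ (by rw [endsB_redToEB, hpq, Sym2.map_mk])
  exact Finset.mem_erase.2 ⟨fun h => redToEB_notMem_T0 e (h ▸ hc), (Finset.mem_filter.1 he).2⟩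

theorem reachable_of_eA_mem {F : Finset P.EB} {a : Fin P.m} (ha : P.eA a ∈ F) :
    Reachable P.endsB F ⊥ (P.liftW (P.liftV (P.aVert a))) :=
  .of_mem ha rfl

theorem reachable_of_eB_mem {F : Finset P.EB} {b : Fin P.n} (hb : P.eB b ∈ F) :
    Reachable P.endsB F (P.liftW ⊥) (P.liftW (P.liftV (P.bVert b))) :=
  .of_mem hb rfl

theorem lexEnds_e00 : P.lexEnds P.e00 = toLex (⊥, P.liftW ⊥) := by
  simp [lexEnds, endMin, endMax, endsB]

theorem lexEnds_eA (a : Fin P.m) :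
    P.lexEnds (P.eA a) = toLex (⊥, P.liftW (P.liftV (P.aVert a))) := by
  simp [lexEnds, endMin, endMax, endsB]

theorem lexEnds_eB (b : Fin P.n) :
    P.lexEnds (P.eB b) = toLex (P.liftW ⊥, P.liftW (P.liftV (P.bVert b))) := by
  have h : P.liftW ⊥ ≤ P.liftW (P.liftV (P.bVert b)) := WithBot.coe_le_coe.2 bot_le
  simp [lexEnds, endMin, endMax, endsB, h]

theorem e00_lt_eA {ord : LinearOrder P.EB} (hord : P.AdmissibleOrder ord) (a : Fin P.m) :
    ord.lt P.e00 (P.eA a) := by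
  apply hord
  rw [lexEnds_e00, lexEnds_eA, Prod.Lex.toLex_lt_toLex]
  exact .inr ⟨rfl, WithBot.coe_lt_coe.2 (WithBot.bot_lt_coe _)⟩

theorem e00_lt_eB {ord : LinearOrder P.EB} (hord : P.AdmissibleOrder ord) (b : Fin P.n) :
    ord.lt P.e00 (P.eB b) := by
  apply hord
  rw [lexEnds_e00, lexEnds_eB, Prod.Lex.toLex_lt_toLex]
  exact .inl (WithBot.bot_lt_coe _)

variable {T : Finset P.EB} {a : Fin P.m} {b : Fin P.n}

theorem isSpanningTree_insert_e00_erase_eA (hT : IsSpanningTree P.endsB T)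
    (ha : P.eA a ∈ T) (hb : P.eB b ∈ T)
    (hsame : Reachable P.endsRed (P.redOf T) (P.liftV (P.aVert a)) (P.liftV (P.bVert b))) :
    IsSpanningTree P.endsB (insert P.e00 (T.erase (P.eA a))) :=
  hT.exchange ha rfl rfl (.refl _) <|
    (reachable_erase_of_reachable_redOf (eA_mem_T0 a) hsame).trans
      (reachable_of_eB_mem (Finset.mem_erase.2 ⟨by simp, hb⟩)).symm

theorem isSpanningTree_insert_e00_erase_eB (hT : IsSpanningTree P.endsB T)
    (ha : P.eA a ∈ T) (hb : P.eB b ∈ T)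
    (hsame : Reachable P.endsRed (P.redOf T) (P.liftV (P.aVert a)) (P.liftV (P.bVert b))) :
    IsSpanningTree P.endsB (insert P.e00 (T.erase (P.eB b))) :=
  hT.exchange hb rfl Sym2.eq_swap (.refl _) <|
    (reachable_erase_of_reachable_redOf (eB_mem_T0 b) hsame).symm.trans
      (reachable_of_eA_mem (Finset.mem_erase.2 ⟨by simp, ha⟩)).symm

end BiconedGraph

theorem birooted_component_edges_passive_general (P : BiconedGraph)
    (ord : LinearOrder P.EB) (hord : P.AdmissibleOrder ord)
    (T : Finset P.EB) (hT : IsSpanningTree P.endsB T)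
    (a : Fin P.m) (b : Fin P.n) (ha : P.eA a ∈ T) (hb : P.eB b ∈ T)
    (hsame : Reachable P.endsRed (P.redOf T)
      (P.liftV (P.aVert a)) (P.liftV (P.bVert b))) :
    (P.InternallyPassive ord T (P.eA a) ∧ P.InternallyPassive ord T (P.eB b)) ∧
    ord.lt P.e00 (P.eA a) ∧ ord.lt P.e00 (P.eB b) ∧
    IsSpanningTree P.endsB (insert P.e00 (T.erase (P.eA a))) ∧
    IsSpanningTree P.endsB (insert P.e00 (T.erase (P.eB b))) := by
  have hA := P.isSpanningTree_insert_e00_erase_eA hT ha hb hsame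
  have hB := P.isSpanningTree_insert_e00_erase_eB hT ha hb hsame
  have hltA := P.e00_lt_eA hord a
  have hltB := P.e00_lt_eB hord b
  exact ⟨⟨⟨ha, _, hltA, hA⟩, ⟨hb, _, hltB, hB⟩⟩, hltA, hltB, hA, hB⟩

/-- Let `T` be a spanning tree of `G^{A,B}` not containing
the edge `00̄`.  If some component of `T \\ T₀` contains two connecting
vertices `a ∈ A` and `b ∈ Ā`, then both connecting edges `0a` and `0̄b` are
internally passive in `T`; indeed each can be exchanged with the smaller edge
`00̄` to yield another spanning tree. -/
theorem birooted_component_edges_passive (P : BiconedGraph)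
    (ord : LinearOrder P.EB) (hord : P.AdmissibleOrder ord)
    (T : Finset P.EB) (hT : IsSpanningTree P.endsB T) (h00 : P.e00 ∉ T)
    (a : Fin P.m) (b : Fin P.n) (ha : P.eA a ∈ T) (hb : P.eB b ∈ T)
    (hsame : Reachable P.endsRed (P.redOf T)
      (P.liftV (P.aVert a)) (P.liftV (P.bVert b))) :
    (P.InternallyPassive ord T (P.eA a) ∧ P.InternallyPassive ord T (P.eB b)) ∧
    ord.lt P.e00 (P.eA a) ∧ ord.lt P.e00 (P.eB b) ∧
    IsSpanningTree P.endsB (insert P.e00 (T.erase (P.eA a))) ∧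
    IsSpanningTree P.endsB (insert P.e00 (T.erase (P.eB b))) :=
  birooted_component_edges_passive_general P ord hord T hT a b ha hb hsame

end

end BiconedPaper
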